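/- Let A be a partial H-module algebra. Then the product on A ⊗ H defined by (a ⊗ h)(b ⊗ k) = Σ a(h₁·b) ⊗ h₂k is associative; the element e = 1_A ⊗ 1_H is an idempotent for this product; and the left ideal generated by e is a unital algebra with unity e, which is spanned, as a vector space, by the elements Σ a(h₁·1_A) ⊗ h₂ for a ∈ A, h ∈ H (this unital algebra is the partial smash product A#H). -/

import Mathlib

/-!
Associativity on pure tensors reduces, by coassociativity of `Δ`, to the identity
`h·(b(g·c)) = Σ (h₁·b)((h₂g)·c)`, which follows from axioms (1) and (3) together with
`h·b = Σ (h₁·b)(h₂·1_A)` (axiom (1) applied to `b·1_A`).  Axiom (2) makes `e` a left unit on all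
of `A ⊗ H`, so the left ideal generated by `e` is the image of `x ↦ xe`; associativity and
`ee = e` make `e` a right unit there, and the images of pure tensors span it.
-/

open TensorProduct

structure IsPartialAction (k : Type*) [Field k] (H A : Type*) [Ring H] [HopfAlgebra k H]
    [Ring A] [Algebra k A] (pact : H →ₗ[k] A →ₗ[k] A) : Prop where
  one_act : ∀ a : A, pact 1 a = a
  act_mul : ∀ (h : H) (a b : A) {ι : Type*} (r : Coalgebra.Repr k h ι),
    pact h (a * b) = ∑ i ∈ r.index, pact (r.left i) a * pact (r.right i) b
  act_act : ∀ (h g : H) (a : A) {ι : Type*} (r : Coalgebra.Repr k h ι),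
    pact h (pact g a) = ∑ i ∈ r.index, pact (r.left i) 1 * pact (r.right i * g) a

noncomputable section

variable (k : Type*) [Field k] (H A : Type*) [Ring H] [HopfAlgebra k H] [Ring A] [Algebra k A]

/-- The smash-product multiplication on `A ⊗ H`:
`(a ⊗ h) (b ⊗ m) = ∑ a (h₁ · b) ⊗ h₂ m`, as a bilinear map. -/
def smashMul (pact : H →ₗ[k] A →ₗ[k] A) :
    (A ⊗[k] H) →ₗ[k] (A ⊗[k] H) →ₗ[k] (A ⊗[k] H) :=
  TensorProduct.curry
    (TensorProduct.map
        (LinearMap.mul' k A ∘ₗ LinearMap.lTensor A (TensorProduct.lift pact)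
          ∘ₗ (TensorProduct.assoc k A H A).toLinearMap)
        (LinearMap.mul' k H)
      ∘ₗ (TensorProduct.tensorTensorTensorComm k (A ⊗[k] H) H A H).toLinearMap
      ∘ₗ LinearMap.rTensor (A ⊗[k] H)
          ((TensorProduct.assoc k A H H).symm.toLinearMap
            ∘ₗ LinearMap.lTensor A Coalgebra.comul))

/-- The left ideal of `(A ⊗ H, smashMul)` generated by the idempotent `e = 1_A ⊗ 1_H`. -/
def smashIdeal (pact : H →ₗ[k] A →ₗ[k] A) : Submodule k (A ⊗[k] H) :=
  Submodule.span k
    (insert ((1 : A) ⊗ₜ[k] (1 : H))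
      {z : A ⊗[k] H | ∃ x : A ⊗[k] H, z = smashMul k H A pact x ((1 : A) ⊗ₜ[k] (1 : H))})

namespace Coalgebra.Repr

variable {R C M : Type*} [CommSemiring R] [AddCommMonoid C] [Module R C]
  [AddCommMonoid M] [Module R M] {c : C} {ι : Type*}

theorem sum_apply_eq_lift_comul [CoalgebraStruct R C] (f : C →ₗ[R] C →ₗ[R] M)
    (r : Repr R c ι) :
    ∑ i ∈ r.index, f (r.left i) (r.right i) = TensorProduct.lift f (CoalgebraStruct.comul c) := by
  simp [← r.eq]

def toULiftFin [CoalgebraStruct R C] (r : Repr R c ι) :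
    Repr R c (ULift.{w} (Fin r.index.card)) where
  index := Finset.univ
  left i := r.left (r.index.equivFin.symm i.down)
  right i := r.right (r.index.equivFin.symm i.down)
  eq := by
    rw [← r.eq, ← Finset.sum_attach r.index fun i => r.left i ⊗ₜ[R] r.right i]
    exact Fintype.sum_equiv (Equiv.ulift.trans r.index.equivFin.symm) _ _ fun _ => rfl

end Coalgebra.Repr

theorem LinearMap.range_eq_span_apply_tmul {R M N P : Type*} [CommSemiring R]
    [AddCommMonoid M] [Module R M] [AddCommMonoid N] [Module R N] [AddCommMonoid P] [Module R P]
    (f : M ⊗[R] N →ₗ[R] P) :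
    LinearMap.range f = Submodule.span R {z | ∃ m n, z = f (m ⊗ₜ n)} := by
  rw [LinearMap.range_eq_map, ← TensorProduct.span_tmul_eq_top, Submodule.map_span]
  congr 1
  ext z
  simp [eq_comm]

namespace IsPartialAction

variable {k H A} {pact : H →ₗ[k] A →ₗ[k] A} (hpa : IsPartialAction k H A pact)
include hpa

-- The fields `act_mul` and `act_act` only accept index types in one fixed universe.
theorem act_mul' (h : H) (a b : A) {ι : Type*} (r : Coalgebra.Repr k h ι) :
    pact h (a * b) = ∑ i ∈ r.index, pact (r.left i) a * pact (r.right i) b := by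
  let f := (LinearMap.mul k A).compl₁₂ (pact.flip a) (pact.flip b)
  rw [hpa.act_mul h a b (Coalgebra.Repr.arbitrary k h).toULiftFin]
  exact ((Coalgebra.Repr.arbitrary k h).toULiftFin.sum_apply_eq_lift_comul f).trans
    (r.sum_apply_eq_lift_comul f).symm

theorem act_act' (h g : H) (a : A) {ι : Type*} (r : Coalgebra.Repr k h ι) :
    pact h (pact g a) = ∑ i ∈ r.index, pact (r.left i) 1 * pact (r.right i * g) a := by
  let f := (LinearMap.mul k A).compl₁₂ (pact.flip 1) (pact.flip a ∘ₗ LinearMap.mulRight k g)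
  rw [hpa.act_act h g a (Coalgebra.Repr.arbitrary k h).toULiftFin]
  exact ((Coalgebra.Repr.arbitrary k h).toULiftFin.sum_apply_eq_lift_comul f).trans
    (r.sum_apply_eq_lift_comul f).symm

theorem sum_act_mul_act_one (h : H) (b : A) {ι : Type*} (r : Coalgebra.Repr k h ι) :
    ∑ i ∈ r.index, pact (r.left i) b * pact (r.right i) 1 = pact h b := by
  rw [← hpa.act_mul' h b 1 r, mul_one]

open Coalgebra in
theorem act_mul_act (g m : H) (b c : A) {ι : Type*} (r : Coalgebra.Repr k g ι) :
    pact g (b * pact m c) = ∑ i ∈ r.index, pact (r.left i) b * pact (r.right i * m) c := by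
  let Φ : H ⊗[k] (H ⊗[k] H) →ₗ[k] A := LinearMap.mul' k A ∘ₗ TensorProduct.map (pact.flip b)
    (LinearMap.mul' k A ∘ₗ TensorProduct.map (pact.flip 1) (pact.flip c ∘ₗ LinearMap.mulRight k m))
  have coassoc := congr(Φ $(sum_tmul_tmul_eq r (fun i => ℛ k (r.left i)) fun i => ℛ k (r.right i)))
  simp only [map_sum, Φ, LinearMap.comp_apply, TensorProduct.map_tmul, LinearMap.mul'_apply,
    LinearMap.flip_apply, LinearMap.mulRight_apply] at coassoc
  calc pact g (b * pact m c)
      = ∑ i ∈ r.index, pact (r.left i) b * pact (r.right i) (pact m c) := hpa.act_mul' g _ _ r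
    _ = ∑ i ∈ r.index, ∑ j ∈ (ℛ k (r.right i)).index,
          pact (r.left i) b * (pact ((ℛ k (r.right i)).left j) 1 *
            pact ((ℛ k (r.right i)).right j * m) c) := by
        simp only [hpa.act_act' _ m c (ℛ k _), Finset.mul_sum]
    _ = ∑ i ∈ r.index, ∑ j ∈ (ℛ k (r.left i)).index,
          pact ((ℛ k (r.left i)).left j) b * (pact ((ℛ k (r.left i)).right j) 1 *
            pact (r.right i * m) c) := coassoc.symm
    _ = ∑ i ∈ r.index, pact (r.left i) b * pact (r.right i * m) c := by
        simp only [← mul_assoc, ← Finset.sum_mul, hpa.sum_act_mul_act_one]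

end IsPartialAction

section SmashProduct

variable {k H A} (pact : H →ₗ[k] A →ₗ[k] A)

theorem smashMul_tmul (a b : A) (h m : H) {ι : Type*} (r : Coalgebra.Repr k h ι) :
    smashMul k H A pact (a ⊗ₜ h) (b ⊗ₜ m) =
      ∑ i ∈ r.index, (a * pact (r.left i) b) ⊗ₜ[k] (r.right i * m) := by
  simp [smashMul, ← r.eq, TensorProduct.tmul_sum, TensorProduct.sum_tmul]

variable {pact} (hpa : IsPartialAction k H A pact)
include hpa

open Coalgebra in
theorem smashMul_assoc_tmul (a b c : A) (h m n : H) :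
    smashMul k H A pact (smashMul k H A pact (a ⊗ₜ h) (b ⊗ₜ m)) (c ⊗ₜ n) =
      smashMul k H A pact (a ⊗ₜ h) (smashMul k H A pact (b ⊗ₜ m) (c ⊗ₜ n)) := by
  let rh := ℛ k h
  let rm := ℛ k m
  let Φ (p : H × H) : H ⊗[k] (H ⊗[k] H) →ₗ[k] A ⊗[k] H :=
    TensorProduct.map
        (LinearMap.mulLeft k a ∘ₗ LinearMap.mul' k A ∘ₗ
          TensorProduct.map (pact.flip b) (pact.flip c ∘ₗ LinearMap.mulRight k (rm.left p)))
        (LinearMap.mulRight k (rm.right p * n)) ∘ₗ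
      (TensorProduct.assoc k H H H).symm.toLinearMap
  have coassoc (p : H × H) :=
    congr(Φ p $(sum_tmul_tmul_eq rh (fun i => ℛ k (rh.left i)) fun i => ℛ k (rh.right i)))
  simp only [map_sum, Φ, LinearMap.comp_apply, LinearEquiv.coe_coe, TensorProduct.assoc_symm_tmul,
    TensorProduct.map_tmul, LinearMap.mul'_apply, LinearMap.flip_apply, LinearMap.mulRight_apply,
    LinearMap.mulLeft_apply] at coassoc
  calc smashMul k H A pact (smashMul k H A pact (a ⊗ₜ h) (b ⊗ₜ m)) (c ⊗ₜ n)
      = ∑ i ∈ rh.index, ∑ p ∈ rm.index, ∑ j ∈ (ℛ k (rh.right i)).index,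
          (a * (pact (rh.left i) b * pact ((ℛ k (rh.right i)).left j * rm.left p) c)) ⊗ₜ
            ((ℛ k (rh.right i)).right j * (rm.right p * n)) := by
        simp only [smashMul_tmul pact a b h m rh, map_sum, LinearMap.sum_apply,
          smashMul_tmul pact _ c _ n ((ℛ k (rh.right _)).mul rm), Repr.mul_index,
          Repr.mul_left, Repr.mul_right, Finset.sum_product_right, mul_assoc]
    _ = ∑ p ∈ rm.index, ∑ i ∈ rh.index, ∑ j ∈ (ℛ k (rh.left i)).index,
          (a * (pact ((ℛ k (rh.left i)).left j) b *
            pact ((ℛ k (rh.left i)).right j * rm.left p) c)) ⊗ₜ (rh.right i * (rm.right p * n)) := by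
        rw [Finset.sum_comm]
        exact Finset.sum_congr rfl fun p _ => (coassoc p).symm
    _ = smashMul k H A pact (a ⊗ₜ h) (smashMul k H A pact (b ⊗ₜ m) (c ⊗ₜ n)) := by
        simp only [smashMul_tmul pact b c m n rm, map_sum,
          smashMul_tmul pact a _ h _ rh, hpa.act_mul_act _ _ b c (ℛ k _), Finset.mul_sum,
          TensorProduct.sum_tmul]

theorem smashMul_assoc (x y z : A ⊗[k] H) :
    smashMul k H A pact (smashMul k H A pact x y) z =
      smashMul k H A pact x (smashMul k H A pact y z) := by
  induction x using TensorProduct.induction_on with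
  | zero => simp
  | add x₁ x₂ hx₁ hx₂ => simp [hx₁, hx₂]
  | tmul a h =>
    induction y using TensorProduct.induction_on with
    | zero => simp
    | add y₁ y₂ hy₁ hy₂ => simp [hy₁, hy₂]
    | tmul b m =>
      induction z using TensorProduct.induction_on with
      | zero => simp
      | add z₁ z₂ hz₁ hz₂ => simp [hz₁, hz₂]
      | tmul c n => exact smashMul_assoc_tmul hpa a b c h m n

theorem one_tmul_one_smashMul (y : A ⊗[k] H) :
    smashMul k H A pact (1 ⊗ₜ 1) y = y := by
  induction y using TensorProduct.induction_on with
  | zero => simp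
  | add y₁ y₂ hy₁ hy₂ => simp [hy₁, hy₂]
  | tmul b m =>
    let one : Coalgebra.Repr k (1 : H) Unit :=
      ⟨{()}, fun _ => 1, fun _ => 1, by simp [Algebra.TensorProduct.one_def]⟩
    simp [smashMul_tmul pact 1 b 1 m one, one, hpa.one_act]

theorem smashIdeal_eq_range :
    smashIdeal k H A pact = LinearMap.range ((smashMul k H A pact).flip (1 ⊗ₜ 1)) := by
  set f := (smashMul k H A pact).flip (1 ⊗ₜ 1)
  have hf : {z | ∃ x, z = smashMul k H A pact x (1 ⊗ₜ 1)} = (LinearMap.range f : Set _) := by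
    ext; simp [f, eq_comm]
  have he : (1 : A) ⊗ₜ[k] (1 : H) ∈ LinearMap.range f := ⟨_, one_tmul_one_smashMul hpa _⟩
  rw [smashIdeal, hf, Submodule.span_insert_eq_span (Submodule.subset_span he), Submodule.span_eq]

end SmashProduct

theorem partial_smash_product (pact : H →ₗ[k] A →ₗ[k] A)
    (hpa : IsPartialAction k H A pact) :
    -- the product is given on pure tensors by `(a ⊗ h)(b ⊗ m) = ∑ a(h₁ · b) ⊗ h₂ m`
    (∀ (a b : A) (h m : H) {ι : Type*} (r : Coalgebra.Repr k h ι),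
      smashMul k H A pact (a ⊗ₜ[k] h) (b ⊗ₜ[k] m) =
        ∑ i ∈ r.index, (a * pact (r.left i) b) ⊗ₜ[k] (r.right i * m)) ∧
    -- associativity
    (∀ x y z : A ⊗[k] H,
      smashMul k H A pact (smashMul k H A pact x y) z =
        smashMul k H A pact x (smashMul k H A pact y z)) ∧
    -- `e` is idempotent
    (smashMul k H A pact ((1 : A) ⊗ₜ[k] (1 : H)) ((1 : A) ⊗ₜ[k] (1 : H)) =
      (1 : A) ⊗ₜ[k] (1 : H)) ∧
    -- the span is a left ideal
    (∀ (x : A ⊗[k] H) (y : A ⊗[k] H), y ∈ smashIdeal k H A pact →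
      smashMul k H A pact x y ∈ smashIdeal k H A pact) ∧
    -- `e` is a two-sided unit for the left ideal it generates
    (∀ y ∈ smashIdeal k H A pact,
      smashMul k H A pact ((1 : A) ⊗ₜ[k] (1 : H)) y = y ∧
      smashMul k H A pact y ((1 : A) ⊗ₜ[k] (1 : H)) = y) ∧
    -- the ideal is spanned by the elements `(a ⊗ h) e = ∑ a (h₁ · 1_A) ⊗ h₂`
    (smashIdeal k H A pact =
      Submodule.span k
        {z : A ⊗[k] H | ∃ (a : A) (h : H),
          z = smashMul k H A pact (a ⊗ₜ[k] h) ((1 : A) ⊗ₜ[k] (1 : H))}) := by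
  refine ⟨fun a b h m _ r => smashMul_tmul pact a b h m r, smashMul_assoc hpa,
    one_tmul_one_smashMul hpa _, ?_, ?_, ?_⟩ <;> rw [smashIdeal_eq_range hpa]
  · rintro x _ ⟨z, rfl⟩
    exact ⟨smashMul k H A pact x z, smashMul_assoc hpa x z _⟩
  · rintro _ ⟨z, rfl⟩
    refine ⟨one_tmul_one_smashMul hpa _, ?_⟩
    simp only [LinearMap.flip_apply, smashMul_assoc hpa, one_tmul_one_smashMul hpa]
  · rw [LinearMap.range_eq_span_apply_tmul]
    rfl

end
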